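/- arXiv:0810.0647 — 4 statements merged into one kernel-verified Lean document; each statement's English description precedes it below -/
import Mathlib

section
/- Let p > 1, C > 0, R ≥ 1. Let θ : [R, ∞) → [0, ∞) be nonincreasing with θ(s) ≤ C·s^{−p} for all s ≥ R, and let g̃ : [R, ∞) → [0, ∞) be nondecreasing and continuous with ∫_R^∞ g̃(s) s^{−p−1} ds < ∞. Then the Lebesgue–Stieltjes integral ∫_{(R,∞)} g̃ d(−θ) is finite and satisfies ∫_{(R,∞)} g̃ d(−θ) ≤ 2Cp ∫_R^∞ g̃(s) s^{−p−1} ds. -/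
open Real MeasureTheory Set

/-!
Layer-cake argument. Writing `ν` for `F.measure` and `μ` for the measure with density
`s ^ (-p - 1)`, the tails satisfy `ν (a, ∞) ≤ θ a ≤ C a ^ (-p) = C p · μ (a, ∞)` for `a ≥ R`.
Since `g` is monotone and continuous, its superlevel sets in `(R, ∞)` are such tails, so the
layer-cake formula turns the comparison of tails into `∫ g dν ≤ C p ∫ g dμ`.
-/

theorem IsUpperSet.eq_Ioi_csInf_of_isOpen {α : Type*} [ConditionallyCompleteLinearOrder α]
    [TopologicalSpace α] [OrderTopology α] [DenselyOrdered α] [NoMinOrder α] {s : Set α}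
    (hs : IsUpperSet s) (ho : IsOpen s) (hne : s.Nonempty) (hbdd : BddBelow s) :
    s = Ioi (sInf s) := by
  have hnotMem : sInf s ∉ s := fun h => by
    obtain ⟨b, hb, hbs⟩ := exists_Ioc_subset_of_mem_nhds (ho.mem_nhds h) (exists_lt (sInf s))
    obtain ⟨c, hbc, hcs⟩ := exists_between hb
    exact (csInf_le hbdd (hbs ⟨hbc, hcs.le⟩)).not_gt hcs
  ext x
  refine ⟨fun hx => (csInf_le hbdd hx).lt_of_ne (ne_of_mem_of_not_mem hx hnotMem).symm,
    fun hx => ?_⟩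
  obtain ⟨y, hy, hyx⟩ := exists_lt_of_csInf_lt hne hx
  exact hs hyx.le hy

theorem StieltjesFunction.measure_Ioi_le (F : StieltjesFunction ℝ) {a B : ℝ}
    (hB : ∀ x, a ≤ x → F x ≤ B) : F.measure (Ioi a) ≤ ENNReal.ofReal (B - F a) := by
  have hFB : ∀ x, F x ≤ B := fun x => (F.mono (le_max_left x a)).trans (hB _ (le_max_right x a))
  rw [F.measure_Ioi (tendsto_atTop_ciSup F.mono ⟨B, forall_mem_range.2 hFB⟩)]
  exact ENNReal.ofReal_le_ofReal (sub_le_sub_right (ciSup_le hFB) _)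

theorem withDensity_ofReal_rpow_Ioi {p a : ℝ} (hp : 0 < p) (ha : 0 < a) :
    volume.withDensity (fun s => ENNReal.ofReal (s ^ (-p - 1))) (Ioi a) =
      ENNReal.ofReal (a ^ (-p) / p) := by
  have hexp : -p - 1 < -1 := by linarith
  rw [withDensity_apply _ measurableSet_Ioi, ← ofReal_integral_eq_lintegral_ofReal
    (integrableOn_Ioi_rpow_of_lt hexp ha)
    (ae_restrict_of_forall_mem measurableSet_Ioi fun s hs => rpow_nonneg (ha.trans hs).le _),
    integral_Ioi_rpow_of_lt hexp ha, sub_add_cancel, neg_div_neg_eq]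

theorem setLIntegral_ofReal_withDensity_ofReal {s : Set ℝ} (hs : MeasurableSet s) {w g : ℝ → ℝ}
    (hw : Measurable w) (hw0 : ∀ x ∈ s, 0 ≤ w x) (hg0 : ∀ x ∈ s, 0 ≤ g x)
    (hint : IntegrableOn (fun x => g x * w x) s) :
    ∫⁻ x in s, ENNReal.ofReal (g x) ∂volume.withDensity (fun x => ENNReal.ofReal (w x)) =
      ENNReal.ofReal (∫ x in s, g x * w x) := by
  rw [setLIntegral_withDensity_eq_setLIntegral_mul_non_measurable _ hw.ennreal_ofReal _ hs
      (ae_of_all _ fun _ => ENNReal.ofReal_lt_top),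
    ofReal_integral_eq_lintegral_ofReal hint
      (ae_restrict_of_forall_mem hs fun x hx => mul_nonneg (hg0 x hx) (hw0 x hx))]
  refine setLIntegral_congr_fun hs fun x hx => ?_
  rw [Pi.mul_apply, ← ENNReal.ofReal_mul (hw0 x hx), mul_comm]

theorem superlevelSet_inter_Ioi_eq_empty_or_Ioi {R t : ℝ} {g : ℝ → ℝ}
    (hmono : MonotoneOn g (Ioi R)) (hcont : ContinuousOn g (Ioi R)) :
    {s | t < g s} ∩ Ioi R = ∅ ∨ ∃ a, R ≤ a ∧ {s | t < g s} ∩ Ioi R = Ioi a := by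
  set S := {s | t < g s} ∩ Ioi R
  rcases S.eq_empty_or_nonempty with hS | hS
  · exact Or.inl hS
  have hbdd : BddBelow S := ⟨R, fun x hx => hx.2.le⟩
  have hupper : IsUpperSet S := fun x y hxy hx =>
    ⟨hx.1.trans_le (hmono hx.2 (hx.2.trans_le hxy) hxy), hx.2.trans_le hxy⟩
  have hopen : IsOpen S := by
    rw [show S = Ioi R ∩ g ⁻¹' Ioi t from inter_comm _ _]
    exact hcont.isOpen_inter_preimage isOpen_Ioi isOpen_Ioi
  exact Or.inr ⟨sInf S, le_csInf hS fun x hx => hx.2.le,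
    hupper.eq_Ioi_csInf_of_isOpen hopen hS hbdd⟩

theorem setLIntegral_Ioi_le_of_measure_Ioi_le {ν μ : Measure ℝ} {R : ℝ} {K : ENNReal}
    (hνμ : ∀ a, R ≤ a → ν (Ioi a) ≤ K * μ (Ioi a)) {g : ℝ → ℝ} (hg0 : ∀ s ∈ Ioi R, 0 ≤ g s)
    (hmono : MonotoneOn g (Ioi R)) (hcont : ContinuousOn g (Ioi R)) :
    ∫⁻ s in Ioi R, ENNReal.ofReal (g s) ∂ν ≤ K * ∫⁻ s in Ioi R, ENNReal.ofReal (g s) ∂μ := by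
  have hsuper (t : ℝ) :
      ν.restrict (Ioi R) {s | t < g s} ≤ K * μ.restrict (Ioi R) {s | t < g s} := by
    simp only [Measure.restrict_apply' measurableSet_Ioi]
    rcases superlevelSet_inter_Ioi_eq_empty_or_Ioi (t := t) hmono hcont with h | ⟨a, ha, h⟩
    · simp [h]
    · rw [h]; exact hνμ a ha
  have hlayer (m : Measure ℝ) := lintegral_eq_lintegral_meas_lt (m.restrict (Ioi R))
    (ae_restrict_of_forall_mem measurableSet_Ioi hg0) (hcont.aemeasurable measurableSet_Ioi)
  have hanti : Antitone fun t => μ.restrict (Ioi R) {s | t < g s} :=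
    fun t t' htt' => measure_mono fun s hs => htt'.trans_lt hs
  rw [hlayer, hlayer, ← lintegral_const_mul _ hanti.measurable]
  exact lintegral_mono hsuper

theorem stmt7_general (p C R : ℝ) (hp : 1 < p) (hR : 1 ≤ R)
    (F : StieltjesFunction ℝ) (θ : ℝ → ℝ) (hθF : ∀ s, θ s = -F s)
    (hθ0 : ∀ s ∈ Ici R, 0 ≤ θ s)
    (hθbound : ∀ s ∈ Ici R, θ s ≤ C * s ^ (-p))
    (g : ℝ → ℝ) (hg0 : ∀ s ∈ Ici R, 0 ≤ g s)
    (hgmono : MonotoneOn g (Ici R)) (hgcont : ContinuousOn g (Ici R))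
    (hgint : IntegrableOn (fun s : ℝ => g s * s ^ (-p - 1)) (Ioi R)) :
    (∫⁻ s in Ioi R, ENNReal.ofReal (g s) ∂F.measure) ≠ ⊤ ∧
      ∫⁻ s in Ioi R, ENNReal.ofReal (g s) ∂F.measure ≤
        ENNReal.ofReal (2 * C * p * ∫ s in Ioi R, g s * s ^ (-p - 1)) := by
  have hR0 : 0 < R := one_pos.trans_le hR
  have hp0 : 0 < p := one_pos.trans hp
  have hC0 : 0 ≤ C := nonneg_of_mul_nonneg_left
    ((hθ0 R self_mem_Ici).trans (hθbound R self_mem_Ici)) (rpow_pos_of_pos hR0 _)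
  have hg0' : ∀ s ∈ Ioi R, 0 ≤ g s := fun s hs => hg0 s (mem_Ici_of_Ioi hs)
  have htail (a : ℝ) (ha : R ≤ a) : F.measure (Ioi a) ≤ ENNReal.ofReal (C * p) *
      volume.withDensity (fun s => ENNReal.ofReal (s ^ (-p - 1))) (Ioi a) := by
    rw [withDensity_ofReal_rpow_Ioi hp0 (hR0.trans_le ha), ← ENNReal.ofReal_mul (by positivity),
      mul_div_assoc', mul_right_comm C p, mul_div_cancel_right₀ _ hp0.ne']
    refine (F.measure_Ioi_le (B := 0) fun x hx => ?_).trans (ENNReal.ofReal_le_ofReal ?_)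
    · linarith [hθF x, hθ0 x (ha.trans hx)]
    · linarith [hθF a, hθbound a ha]
  have hI0 : 0 ≤ ∫ s in Ioi R, g s * s ^ (-p - 1) := setIntegral_nonneg measurableSet_Ioi
    fun s hs => mul_nonneg (hg0' s hs) (rpow_nonneg (hR0.trans hs).le _)
  have hdensity : ∫⁻ s in Ioi R, ENNReal.ofReal (g s)
        ∂volume.withDensity (fun s => ENNReal.ofReal (s ^ (-p - 1))) =
      ENNReal.ofReal (∫ s in Ioi R, g s * s ^ (-p - 1)) :=
    setLIntegral_ofReal_withDensity_ofReal measurableSet_Ioi (by fun_prop)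
      (fun s hs => rpow_nonneg (hR0.trans hs).le _) hg0' hgint
  have hmain : ∫⁻ s in Ioi R, ENNReal.ofReal (g s) ∂F.measure ≤
      ENNReal.ofReal (C * p * ∫ s in Ioi R, g s * s ^ (-p - 1)) := by
    rw [ENNReal.ofReal_mul (by positivity), ← hdensity]
    exact setLIntegral_Ioi_le_of_measure_Ioi_le htail hg0'
      (hgmono.mono Ioi_subset_Ici_self) (hgcont.mono Ioi_subset_Ici_self)
  refine ⟨ne_top_of_le_ne_top ENNReal.ofReal_ne_top hmain,
    hmain.trans (ENNReal.ofReal_le_ofReal ?_)⟩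
  nlinarith [mul_nonneg (mul_nonneg hC0 hp0.le) hI0]

/-- integration-by-parts bound for the Lebesgue–Stieltjes integral
`∫_{(R,∞)} g̃ d(−θ)`, where `θ = −F` is nonincreasing (with `F` a Stieltjes function,
so `F.measure` is the Lebesgue–Stieltjes measure `d(−θ)`), `0 ≤ θ(s) ≤ C s^{−p}` on `[R,∞)`,
and `g̃ ≥ 0` is nondecreasing and continuous with `∫_R^∞ g̃(s) s^{−p−1} ds < ∞`. Then
`∫_{(R,∞)} g̃ d(−θ)` is finite and bounded by `2Cp ∫_R^∞ g̃(s) s^{−p−1} ds`. -/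
theorem stmt7 (p C R : ℝ) (hp : 1 < p) (hC : 0 < C) (hR : 1 ≤ R)
    (F : StieltjesFunction ℝ) (θ : ℝ → ℝ) (hθF : ∀ s, θ s = -F s)
    (hθ0 : ∀ s ∈ Ici R, 0 ≤ θ s)
    (hθbound : ∀ s ∈ Ici R, θ s ≤ C * s ^ (-p))
    (g : ℝ → ℝ) (hg0 : ∀ s ∈ Ici R, 0 ≤ g s)
    (hgmono : MonotoneOn g (Ici R)) (hgcont : ContinuousOn g (Ici R))
    (hgint : IntegrableOn (fun s : ℝ => g s * s ^ (-p - 1)) (Ioi R)) :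
    (∫⁻ s in Ioi R, ENNReal.ofReal (g s) ∂F.measure) ≠ ⊤ ∧
      ∫⁻ s in Ioi R, ENNReal.ofReal (g s) ∂F.measure ≤
        ENNReal.ofReal (2 * C * p * ∫ s in Ioi R, g s * s ^ (-p - 1)) :=
  stmt7_general p C R hp hR F θ hθF hθ0 hθbound g hg0 hgmono hgcont hgint
end

section
/- Let n ≥ 1, q > 1, x₀ ∈ ℝⁿ and R > 0. There exists a constant C = C(n,q) > 0 such that every nonnegative function u ∈ C²(B_R(x₀)) satisfying Δu = u^q in the open ball B_R(x₀) obeys u(x₀) ≤ C·R^{−2/(q-1)}. -/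
open Real MeasureTheory Metric

noncomputable def laplacian {n : ℕ} (u : EuclideanSpace ℝ (Fin n) → ℝ)
    (x : EuclideanSpace ℝ (Fin n)) : ℝ :=
  ∑ i : Fin n,
    fderiv ℝ (fun y => fderiv ℝ u y (EuclideanSpace.single i 1)) x (EuclideanSpace.single i 1)

/-!
Put `α = 2 / (q - 1)`. For `κ ^ (q - 1) = α (4 (α + 1) + 2 n)` the barrier
`v x = κ r ^ α (r ^ 2 - ‖x - c‖ ^ 2) ^ (-α)` satisfies `Δv ≤ v ^ q` in `B_r(c)` and blows up on the
sphere. If `u`, bounded on `B_r(c)` with `Δu ≥ u ^ q`, exceeded `v` somewhere, then `u - v` would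
attain a positive interior maximum at some `y`, where `Δu y ≤ Δv y`, hence `u y ^ q ≤ v y ^ q`,
contradicting `u y > v y ≥ 0`. Taking `r = R / 2` gives `u x₀ ≤ v x₀ = κ 2 ^ α R ^ (-α)`.
-/

open Filter Topology Set

theorem IsCompact.exists_isLocalMax_of_le_off {X β : Type*} [TopologicalSpace X] [LinearOrder β]
    [TopologicalSpace β] [ClosedIciTopology β] {f : X → β} {U K : Set X} {x₀ : X}
    (hK : IsCompact K) (hU : IsOpen U) (hKU : K ⊆ U) (hf : ContinuousOn f K) (hx₀ : x₀ ∈ K)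
    (hout : ∀ x ∈ U \ K, f x ≤ f x₀) : ∃ y ∈ K, IsLocalMax f y ∧ f x₀ ≤ f y := by
  obtain ⟨y, hyK, hy⟩ := hK.exists_isMaxOn ⟨x₀, hx₀⟩ hf
  refine ⟨y, hyK, ?_, hy hx₀⟩
  filter_upwards [hU.mem_nhds (hKU hyK)] with x hxU
  by_cases hxK : x ∈ K
  · exact hy hxK
  · exact (hout x ⟨hxU, hxK⟩).trans (hy hx₀)

theorem IsLocalMax.deriv_deriv_nonpos {f : ℝ → ℝ} {a : ℝ} (hmax : IsLocalMax f a)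
    (hf : ContinuousAt f a) : deriv (deriv f) a ≤ 0 := by
  by_contra! hpos
  have hmin := isLocalMin_of_deriv_deriv_pos hpos hmax.deriv_eq_zero hf
  -- by the second-derivative test `a` would also be a local minimum, making `f` locally constant
  have hconst : f =ᶠ[𝓝 a] fun _ => f a :=
    (hmin.and hmax).mono fun x hx => le_antisymm hx.2 hx.1
  simp [hconst.deriv.deriv_eq] at hpos

theorem hasDerivAt_const_sub_rpow {a s : ℝ} (p : ℝ) (hs : s < a) :
    HasDerivAt (fun s => (a - s) ^ p) (-p * (a - s) ^ (p - 1)) s := by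
  convert ((hasDerivAt_id' s).const_sub a).rpow_const (p := p) (Or.inl (sub_pos.2 hs).ne') using 1
  ring

theorem norm_sub_sq_lt_sq_of_mem_ball {E : Type*} [SeminormedAddCommGroup E] {c x : E} {r : ℝ}
    (hx : x ∈ ball c r) : ‖x - c‖ ^ 2 < r ^ 2 :=
  pow_lt_pow_left₀ (mem_ball_iff_norm.1 hx) (norm_nonneg _) two_ne_zero

section NormedSpace

variable {E F : Type*} [NormedAddCommGroup E] [NormedSpace ℝ E] [NormedAddCommGroup F]
  [NormedSpace ℝ F]

theorem ContDiffAt.eventually_differentiableAt {f : E → F} {y : E} (hf : ContDiffAt ℝ 2 f y) :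
    ∀ᶠ x in 𝓝 y, DifferentiableAt ℝ f x :=
  (hf.eventually (by simp)).mono fun _ hx => hx.differentiableAt (by norm_num)

theorem ContDiffAt.differentiableAt_fderiv_apply {f : E → F} {y : E} (hf : ContDiffAt ℝ 2 f y)
    (e : E) : DifferentiableAt ℝ (fun x => fderiv ℝ f x e) y :=
  ((hf.fderiv_right (m := 1) (by norm_num)).differentiableAt one_ne_zero).clm_apply
    (differentiableAt_const e)

theorem IsLocalMax.fderiv_fderiv_apply_nonpos {f : E → ℝ} {y : E} (hmax : IsLocalMax f y)
    (hf : ContDiffAt ℝ 2 f y) (e : E) : fderiv ℝ (fun x => fderiv ℝ f x e) y e ≤ 0 := by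
  let L : ℝ → E := fun t => y + t • e
  have hL : ∀ t, HasDerivAt L e t := fun t =>
    (((hasDerivAt_id t).smul_const e).const_add y).congr_deriv (one_smul ℝ e)
  have hL0 : L 0 = y := by simp [L]
  rw [← hL0] at hmax hf ⊢
  have hderiv : deriv (f ∘ L) =ᶠ[𝓝 0] fun t => fderiv ℝ f (L t) e := by
    filter_upwards [(hL 0).continuousAt.eventually hf.eventually_differentiableAt] with t ht
    exact (ht.hasFDerivAt.comp_hasDerivAt t (hL t)).deriv
  have hsecond : deriv (deriv (f ∘ L)) 0 = fderiv ℝ (fun x => fderiv ℝ f x e) (L 0) e := by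
    rw [hderiv.deriv_eq]
    exact ((hf.differentiableAt_fderiv_apply e).hasFDerivAt.comp_hasDerivAt 0 (hL 0)).deriv
  rw [← hsecond]
  exact (hmax.comp_continuous (hL 0).continuousAt).deriv_deriv_nonpos
    (hf.continuousAt.comp (hL 0).continuousAt)

end NormedSpace

section Euclidean

variable {n : ℕ}

local notation "ℝⁿ" => EuclideanSpace ℝ (Fin n)

theorem laplacian_sub {u v : ℝⁿ → ℝ} {y : ℝⁿ} (hu : ContDiffAt ℝ 2 u y)
    (hv : ContDiffAt ℝ 2 v y) : laplacian (u - v) y = laplacian u y - laplacian v y := by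
  simp only [laplacian, ← Finset.sum_sub_distrib]
  refine Finset.sum_congr rfl fun i _ => ?_
  set e : ℝⁿ := EuclideanSpace.single i 1
  have hfd : (fun x => fderiv ℝ (u - v) x e) =ᶠ[𝓝 y]
      fun x => fderiv ℝ u x e - fderiv ℝ v x e := by
    filter_upwards [hu.eventually_differentiableAt, hv.eventually_differentiableAt]
      with x hux hvx
    rw [fderiv_sub hux hvx, sub_apply]
  rw [hfd.fderiv_eq, ((hu.differentiableAt_fderiv_apply e).hasFDerivAt.fun_sub
    (hv.differentiableAt_fderiv_apply e).hasFDerivAt).fderiv, sub_apply]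

theorem IsLocalMax.laplacian_nonpos {u : ℝⁿ → ℝ} {y : ℝⁿ} (hmax : IsLocalMax u y)
    (hu : ContDiffAt ℝ 2 u y) : laplacian u y ≤ 0 :=
  Finset.sum_nonpos fun _ _ => hmax.fderiv_fderiv_apply_nonpos hu _

theorem laplacian_comp_norm_sq_sub {g g' : ℝ → ℝ} {g'' : ℝ} {c y : ℝⁿ}
    (hg : ∀ᶠ s in 𝓝 (‖y - c‖ ^ 2), HasDerivAt g (g' s) s)
    (hg' : HasDerivAt g' g'' (‖y - c‖ ^ 2)) :
    laplacian (fun x => g (‖x - c‖ ^ 2)) y = 4 * g'' * ‖y - c‖ ^ 2 + 2 * n * g' (‖y - c‖ ^ 2) := by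
  have hN : ∀ x : ℝⁿ, HasFDerivAt (fun x => ‖x - c‖ ^ 2) (2 • innerSL ℝ (x - c)) x := fun x =>
    (HasFDerivAt.comp (g := fun x : ℝⁿ => ‖x‖ ^ 2) x (hasStrictFDerivAt_norm_sq (x - c)).hasFDerivAt
      (hasFDerivAt_sub_const c)).congr_fderiv (ContinuousLinearMap.comp_id _)
  have hfirst : (fderiv ℝ fun x => g (‖x - c‖ ^ 2)) =ᶠ[𝓝 y]
      fun x => g' (‖x - c‖ ^ 2) • 2 • innerSL ℝ (x - c) := by
    filter_upwards [(hN y).continuousAt.eventually hg] with x hx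
    exact (hx.comp_hasFDerivAt x (hN x)).fderiv
  have hsecond : ∀ e : ℝⁿ, fderiv ℝ (fun x => fderiv ℝ (fun x => g (‖x - c‖ ^ 2)) x e) y e
      = 4 * g'' * inner ℝ (y - c) e ^ 2 + 2 * g' (‖y - c‖ ^ 2) * ‖e‖ ^ 2 := fun e => by
    have hlin : HasFDerivAt (fun x => 2 * inner ℝ e (x - c)) ((2 : ℝ) • innerSL ℝ e) y := by
      simpa using ((innerSL ℝ e).hasFDerivAt.comp y (hasFDerivAt_sub_const c)).const_mul 2
    have hprod : HasFDerivAt (fun x => g' (‖x - c‖ ^ 2) * (2 * inner ℝ e (x - c))) _ y :=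
      (hg'.comp_hasFDerivAt y (hN y)).fun_mul hlin
    have hfirst_e : (fun x => fderiv ℝ (fun x => g (‖x - c‖ ^ 2)) x e) =ᶠ[𝓝 y]
        fun x => g' (‖x - c‖ ^ 2) * (2 * inner ℝ e (x - c)) := by
      filter_upwards [hfirst] with x hx
      simp only [hx, smul_apply, innerSL_apply_apply, smul_eq_mul, nsmul_eq_mul, Nat.cast_ofNat,
        real_inner_comm e]
    rw [hfirst_e.fderiv_eq, hprod.fderiv]
    simp only [add_apply, smul_apply, innerSL_apply_apply, smul_eq_mul, nsmul_eq_mul,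
      Nat.cast_ofNat, Function.comp_apply, real_inner_self_eq_norm_sq, real_inner_comm (y - c) e]
    ring
  simp only [laplacian, hsecond, EuclideanSpace.inner_single_right, PiLp.norm_single,
    one_mul, norm_one, one_pow, Finset.sum_add_distrib, ← Finset.mul_sum, Finset.sum_const,
    Finset.card_univ, Fintype.card_fin, nsmul_eq_mul]
  rw [EuclideanSpace.norm_sq_eq]
  simp only [conj_trivial, Real.norm_eq_abs, sq_abs]
  ring

noncomputable def kellerOssermanBarrier (κ α r : ℝ) (c x : ℝⁿ) : ℝ :=
  κ * r ^ α * (r ^ 2 - ‖x - c‖ ^ 2) ^ (-α)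

variable {κ α r : ℝ} {c : EuclideanSpace ℝ (Fin n)}

theorem kellerOssermanBarrier_self (hr : 0 < r) :
    kellerOssermanBarrier κ α r c c = κ * r ^ (-α) := by
  rw [kellerOssermanBarrier, sub_self, norm_zero, zero_pow two_ne_zero, sub_zero,
    ← Real.rpow_natCast, ← Real.rpow_mul hr.le, mul_assoc, ← Real.rpow_add hr]
  congr 2
  push_cast
  ring

theorem kellerOssermanBarrier_nonneg (hκ : 0 ≤ κ) {x : ℝⁿ} (hx : x ∈ ball c r) :
    0 ≤ kellerOssermanBarrier κ α r c x := by
  have hr : 0 < r := pos_of_mem_ball hx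
  have hT : 0 < r ^ 2 - ‖x - c‖ ^ 2 := sub_pos.2 (norm_sub_sq_lt_sq_of_mem_ball hx)
  unfold kellerOssermanBarrier
  positivity

theorem contDiffOn_kellerOssermanBarrier :
    ContDiffOn ℝ 2 (kellerOssermanBarrier κ α r c) (ball c r) := by
  intro x hx
  have hT : r ^ 2 - ‖x - c‖ ^ 2 ≠ 0 := (sub_pos.2 (norm_sub_sq_lt_sq_of_mem_ball hx)).ne'
  exact (contDiffAt_const.mul ((contDiffAt_const.sub
    ((contDiffAt_id.sub contDiffAt_const).norm_sq ℝ)).rpow_const_of_ne hT)).contDiffWithinAt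

theorem tendsto_kellerOssermanBarrier (hκ : 0 < κ) (hα : 0 < α) (hr : 0 < r) :
    Tendsto (kellerOssermanBarrier κ α r c) (comap (dist · c) (𝓝[<] r)) atTop := by
  have hgap : Tendsto (fun t => r ^ 2 - t ^ 2) (𝓝[<] r) (𝓝[>] 0) := by
    refine tendsto_nhdsWithin_iff.2 ⟨?_, ?_⟩
    · exact ((continuous_const.sub (continuous_pow 2)).tendsto' r 0 (by simp)).mono_left
        nhdsWithin_le_nhds
    · filter_upwards [Ioo_mem_nhdsLT hr] with t ht
      exact sub_pos.2 (pow_lt_pow_left₀ ht.2 ht.1.le two_ne_zero)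
  have hprofile := ((tendsto_rpow_neg_nhdsGT_zero (neg_lt_zero.2 hα)).comp hgap).const_mul_atTop
    (by positivity : 0 < κ * r ^ α)
  convert hprofile.comp tendsto_comap using 1
  ext x
  simp [kellerOssermanBarrier, dist_eq_norm]

theorem laplacian_kellerOssermanBarrier {y : ℝⁿ} (hy : y ∈ ball c r) :
    laplacian (kellerOssermanBarrier κ α r c) y =
      κ * r ^ α * α * (r ^ 2 - ‖y - c‖ ^ 2) ^ (-α - 2) *
        (4 * (α + 1) * ‖y - c‖ ^ 2 + 2 * n * (r ^ 2 - ‖y - c‖ ^ 2)) := by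
  set Λ := κ * r ^ α
  have hy' := norm_sub_sq_lt_sq_of_mem_ball hy
  have hg : ∀ᶠ s in 𝓝 (‖y - c‖ ^ 2), HasDerivAt (fun s => Λ * (r ^ 2 - s) ^ (-α))
      (Λ * α * (r ^ 2 - s) ^ (-α - 1)) s := by
    filter_upwards [eventually_lt_nhds hy'] with s hs
    exact ((hasDerivAt_const_sub_rpow (-α) hs).const_mul Λ).congr_deriv (by ring)
  have hg' : HasDerivAt (fun s => Λ * α * (r ^ 2 - s) ^ (-α - 1))
      (Λ * α * (α + 1) * (r ^ 2 - ‖y - c‖ ^ 2) ^ (-α - 2)) (‖y - c‖ ^ 2) := by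
    refine ((hasDerivAt_const_sub_rpow (-α - 1) hy').const_mul (Λ * α)).congr_deriv ?_
    rw [show -α - 1 - 1 = -α - 2 by ring]
    ring
  have hT : (r ^ 2 - ‖y - c‖ ^ 2) ^ (-α - 1) =
      (r ^ 2 - ‖y - c‖ ^ 2) ^ (-α - 2) * (r ^ 2 - ‖y - c‖ ^ 2) := by
    rw [← Real.rpow_add_one (sub_pos.2 hy').ne']
    ring_nf
  rw [show kellerOssermanBarrier κ α r c = fun x => Λ * (r ^ 2 - ‖x - c‖ ^ 2) ^ (-α) from rfl,
    laplacian_comp_norm_sq_sub hg hg', hT]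
  ring

theorem laplacian_kellerOssermanBarrier_le_rpow {q : ℝ} (hq : 1 < q) (hα : α * (q - 1) = 2)
    (hκ : 0 < κ) (hκq : κ ^ (q - 1) = α * (4 * (α + 1) + 2 * n)) {y : ℝⁿ} (hy : y ∈ ball c r) :
    laplacian (kellerOssermanBarrier κ α r c) y ≤ kellerOssermanBarrier κ α r c y ^ q := by
  have hr : 0 < r := pos_of_mem_ball hy
  have hα0 : 0 < α := pos_of_mul_pos_left (hα ▸ two_pos) (by linarith)
  set s := ‖y - c‖ ^ 2
  set T := r ^ 2 - s
  have hT : 0 < T := sub_pos.2 (norm_sub_sq_lt_sq_of_mem_ball hy)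
  have hκ' : κ ^ q = κ * κ ^ (q - 1) := by
    rw [← Real.rpow_one_add' hκ.le (by linarith)]
    ring_nf
  have hr' : (r ^ α) ^ q = r ^ α * r ^ 2 := by
    rw [← Real.rpow_mul hr.le, ← Real.rpow_natCast, ← Real.rpow_add hr]
    congr 1
    push_cast
    linear_combination hα
  have hT' : (T ^ (-α)) ^ q = T ^ (-α - 2) := by
    rw [← Real.rpow_mul hT.le]
    congr 1
    linear_combination -hα
  have hv : kellerOssermanBarrier κ α r c y ^ q =
      κ * r ^ α * α * T ^ (-α - 2) * ((4 * (α + 1) + 2 * n) * r ^ 2) := by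
    rw [kellerOssermanBarrier, Real.mul_rpow (by positivity) (by positivity),
      Real.mul_rpow hκ.le (by positivity), hκ', hκq, hr', hT']
    ring
  rw [laplacian_kellerOssermanBarrier hy, hv]
  have hs : 0 ≤ s := by positivity
  gcongr
  nlinarith

theorem rpow_subsolution_le_blowup_supersolution {q : ℝ} (hq : 0 < q) {u v : ℝⁿ → ℝ}
    (hu : ContDiffOn ℝ 2 u (ball c r)) (hu_bdd : BddAbove (u '' ball c r))
    (hu_sub : ∀ x ∈ ball c r, u x ^ q ≤ laplacian u x)
    (hv : ContDiffOn ℝ 2 v (ball c r)) (hv_nonneg : ∀ x ∈ ball c r, 0 ≤ v x)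
    (hv_super : ∀ x ∈ ball c r, laplacian v x ≤ v x ^ q)
    (hv_top : Tendsto v (comap (dist · c) (𝓝[<] r)) atTop) {x₁ : ℝⁿ} (hx₁ : x₁ ∈ ball c r) :
    u x₁ ≤ v x₁ := by
  by_contra! hlt
  obtain ⟨B, hB⟩ := hu_bdd
  obtain ⟨ρ₀, hρ₀, hvB⟩ : ∃ ρ₀ < r, ∀ x, dist x c ∈ Ioo ρ₀ r → B ≤ v x := by
    obtain ⟨ρ₀, hρ₀, h⟩ :=
      (nhdsLT_basis r).eventually_iff.1 (eventually_comap.1 (hv_top.eventually_ge_atTop B))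
    exact ⟨ρ₀, hρ₀, fun x hx => h hx x rfl⟩
  have hρ : max ρ₀ (dist x₁ c) < r := max_lt hρ₀ hx₁
  have hsub := closedBall_subset_ball (x := c) hρ
  have hout : ∀ x ∈ ball c r \ closedBall c (max ρ₀ (dist x₁ c)), (u - v) x ≤ (u - v) x₁ := by
    rintro x ⟨hx, hxρ⟩
    have hvx : B ≤ v x :=
      hvB x ⟨(le_max_left _ _).trans_lt (not_le.1 (mt mem_closedBall.2 hxρ)), hx⟩
    have hux : u x ≤ B := hB (mem_image_of_mem u hx)
    simp only [Pi.sub_apply]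
    linarith
  obtain ⟨y, hyρ, hmax, hy⟩ := (isCompact_closedBall c _).exists_isLocalMax_of_le_off isOpen_ball
    hsub ((hu.continuousOn.sub hv.continuousOn).mono hsub)
    (mem_closedBall.2 (le_max_right _ _)) hout
  have hy_ball := hsub hyρ
  have hu_y := hu.contDiffAt (isOpen_ball.mem_nhds hy_ball)
  have hv_y := hv.contDiffAt (isOpen_ball.mem_nhds hy_ball)
  have hlap : laplacian u y ≤ laplacian v y :=
    sub_nonpos.1 (laplacian_sub hu_y hv_y ▸ hmax.laplacian_nonpos (hu_y.sub hv_y))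
  have hvu : v y < u y := by
    simp only [Pi.sub_apply] at hy
    linarith
  exact (Real.rpow_lt_rpow (hv_nonneg y hy_ball) hvu hq).not_ge
    ((hu_sub y hy_ball).trans (hlap.trans (hv_super y hy_ball)))

end Euclidean

theorem stmt10_general (n : ℕ) (q : ℝ) (hq : 1 < q) :
    ∃ C : ℝ, 0 < C ∧
      ∀ (x₀ : EuclideanSpace ℝ (Fin n)) (R : ℝ), 0 < R →
        ∀ u : EuclideanSpace ℝ (Fin n) → ℝ,
          ContDiffOn ℝ 2 u (ball x₀ R) →
          (∀ x ∈ ball x₀ R, 0 ≤ u x) →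
          (∀ x ∈ ball x₀ R, laplacian u x = u x ^ q) →
          u x₀ ≤ C * R ^ (-(2 / (q - 1))) := by
  have hq1 : 0 < q - 1 := sub_pos.2 hq
  set α := 2 / (q - 1)
  have hα : α * (q - 1) = 2 := div_mul_cancel₀ 2 hq1.ne'
  have hα0 : 0 < α := by positivity
  set κ := (α * (4 * (α + 1) + 2 * n)) ^ (q - 1)⁻¹
  have hκ : 0 < κ := by positivity
  have hκq : κ ^ (q - 1) = α * (4 * (α + 1) + 2 * n) := Real.rpow_inv_rpow (by positivity) hq1.ne'
  refine ⟨κ * 2 ^ α, by positivity, fun x₀ R hR u hu _ hpde => ?_⟩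
  have hr : 0 < R / 2 := half_pos hR
  have hrR : ball x₀ (R / 2) ⊆ ball x₀ R := ball_subset_ball (half_le_self hR.le)
  have hbdd : BddAbove (u '' ball x₀ (R / 2)) :=
    ((isCompact_closedBall x₀ _).bddAbove_image (hu.continuousOn.mono
      (closedBall_subset_ball (half_lt_self hR)))).mono (image_mono ball_subset_closedBall)
  calc u x₀ ≤ kellerOssermanBarrier κ α (R / 2) x₀ x₀ :=
        rpow_subsolution_le_blowup_supersolution (by linarith) (hu.mono hrR) hbdd
          (fun x hx => (hpde x (hrR hx)).ge) contDiffOn_kellerOssermanBarrier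
          (fun x hx => kellerOssermanBarrier_nonneg hκ.le hx)
          (fun x hx => laplacian_kellerOssermanBarrier_le_rpow hq hα hκ hκq hx)
          (tendsto_kellerOssermanBarrier hκ hα0 hr) (mem_ball_self hr)
    _ = κ * 2 ^ α * R ^ (-α) := by
        rw [kellerOssermanBarrier_self hr, Real.div_rpow hR.le zero_le_two,
          Real.rpow_neg zero_le_two]
        field_simp

/-- Keller–Osserman estimate. For `n ≥ 1`, `q > 1` there is `C = C(n,q) > 0`
such that every nonnegative `C²` solution of `Δu = u^q` on a ball `B_R(x₀)` satisfies
`u(x₀) ≤ C R^{−2/(q−1)}`. -/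
theorem stmt10 (n : ℕ) (hn : 1 ≤ n) (q : ℝ) (hq : 1 < q) :
    ∃ C : ℝ, 0 < C ∧
      ∀ (x₀ : EuclideanSpace ℝ (Fin n)) (R : ℝ), 0 < R →
        ∀ u : EuclideanSpace ℝ (Fin n) → ℝ,
          ContDiffOn ℝ 2 u (ball x₀ R) →
          (∀ x ∈ ball x₀ R, 0 ≤ u x) →
          (∀ x ∈ ball x₀ R, laplacian u x = u x ^ q) →
          u x₀ ≤ C * R ^ (-(2 / (q - 1))) :=
  stmt10_general n q hq
end

section
/- Let R > 0, let h : (0,R] → ℝ be measurable with ∫₀^R s·|h(s)| ds < ∞, and let w ∈ C²((0,R]) satisfy (r·w'(r))' = r·h(r) for all r ∈ (0,R]. Then: (a) the limit α = lim_{r→0⁺} r·w'(r) exists and is finite; (b) if α = 0, then w(r)/ln(1/r) → 0 as r → 0⁺. -/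
open Real Set Filter MeasureTheory

/-- radial ODE lemma. If `∫₀^R s|h(s)| ds < ∞` and `(r w'(r))' = r h(r)` on
`(0,R]`, then `r w'(r)` has a finite limit `α` as `r → 0⁺`, and if `α = 0` then
`w(r)/ln(1/r) → 0` as `r → 0⁺`. -/
theorem stmt12 (R : ℝ) (hR : 0 < R) (h : ℝ → ℝ) (hmeas : Measurable h)
    (hint : IntegrableOn (fun s => s * h s) (Ioc (0 : ℝ) R))
    (w w' : ℝ → ℝ)
    (hw : ∀ r ∈ Ioc (0 : ℝ) R, HasDerivWithinAt w (w' r) (Ioc (0 : ℝ) R) r)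
    (hw' : ∀ r ∈ Ioc (0 : ℝ) R, HasDerivWithinAt (fun t => t * w' t) (r * h r)
      (Ioc (0 : ℝ) R) r) :
    ∃ α : ℝ, Tendsto (fun r => r * w' r) (nhdsWithin 0 (Ioi (0 : ℝ))) (nhds α) ∧
      (α = 0 → Tendsto (fun r => w r / Real.log (1 / r)) (nhdsWithin 0 (Ioi (0 : ℝ)))
        (nhds 0)) := by
  set S := Ioc (0 : ℝ) R with hS
  set f : ℝ → ℝ := fun s => s * h s with hf
  set F : ℝ → ℝ := fun t => t * w' t with hF
  -- basic continuity
  have hFcont : ContinuousOn F S := fun x hx => (hw' x hx).continuousWithinAt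
  have hwcont : ContinuousOn w S := fun x hx => (hw x hx).continuousWithinAt
  have hw'cont : ContinuousOn w' S := by
    have hc : ContinuousOn (fun t => F t / t) S :=
      hFcont.div continuousOn_id (fun x hx => ne_of_gt hx.1)
    refine hc.congr (fun x hx => ?_)
    have hx0 : x ≠ 0 := ne_of_gt hx.1
    simp only [hF]
    field_simp
  -- FTC helper
  have ftc : ∀ (g g' : ℝ → ℝ), (∀ r ∈ S, HasDerivWithinAt g (g' r) S r) →
      ∀ a b : ℝ, 0 < a → a ≤ b → b ≤ R → IntervalIntegrable g' volume a b →
      ∫ t in a..b, g' t = g b - g a := by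
    intro g g' hg a b ha hab hbR hiab
    apply intervalIntegral.integral_eq_sub_of_hasDeriv_right_of_le hab ?_ ?_ hiab
    · intro x hx
      exact ((hg x ⟨ha.trans_le hx.1, hx.2.trans hbR⟩).continuousWithinAt).mono
        (fun y hy => ⟨ha.trans_le hy.1, hy.2.trans hbR⟩)
    · intro x hx
      have hxS : x ∈ S := ⟨ha.trans hx.1, (hx.2.trans_le hbR).le⟩
      have hmem : S ∈ nhds x :=
        mem_of_superset (Ioo_mem_nhds hxS.1 (hx.2.trans_le hbR)) Ioo_subset_Ioc_self
      exact ((hg x hxS).hasDerivAt hmem).hasDerivWithinAt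
  -- integrability of f on subintervals
  have hIf : ∀ a b : ℝ, 0 ≤ a → a ≤ b → b ≤ R → IntervalIntegrable f volume a b :=
    fun a b ha hab hbR => (intervalIntegrable_iff_integrableOn_Ioc_of_le hab).2
      (hint.mono_set (Ioc_subset_Ioc ha hbR))
  have hintabs : IntegrableOn (fun s => |f s|) (Ioc (0 : ℝ) R) := hint.abs
  have hIfabs : ∀ a b : ℝ, 0 ≤ a → a ≤ b → b ≤ R →
      IntervalIntegrable (fun s => |f s|) volume a b :=
    fun a b ha hab hbR => (intervalIntegrable_iff_integrableOn_Ioc_of_le hab).2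
      (hintabs.mono_set (Ioc_subset_Ioc ha hbR))
  -- primitives
  set P : ℝ → ℝ := fun r => ∫ t in (0:ℝ)..r, f t with hPdef
  set Q : ℝ → ℝ := fun r => ∫ t in (0:ℝ)..r, |f t| with hQdef
  have hmem0R : (0:ℝ) ∈ Icc (0:ℝ) R := ⟨le_rfl, hR.le⟩
  have huIcc : uIcc (0:ℝ) R = Icc (0:ℝ) R := uIcc_of_le hR.le
  have hfIcc : IntegrableOn f (Icc 0 R) := by
    rw [integrableOn_Icc_iff_integrableOn_Ioc]; exact hint
  have hfabsIcc : IntegrableOn (fun s => |f s|) (Icc 0 R) := by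
    rw [integrableOn_Icc_iff_integrableOn_Ioc]; exact hintabs
  have hle : nhdsWithin (0:ℝ) (Ioi 0) ≤ nhdsWithin (0:ℝ) (Icc 0 R) := by
    rw [← nhdsWithin_Ioc_eq_nhdsGT hR]
    exact nhdsWithin_mono _ Ioc_subset_Icc_self
  have hPcont : ContinuousOn P (Icc 0 R) := by
    have := intervalIntegral.continuousOn_primitive_interval (a := (0:ℝ)) (b := R)
      (μ := volume) (f := f) (by rwa [huIcc])
    rwa [huIcc] at this
  have hQcont : ContinuousOn Q (Icc 0 R) := by
    have := intervalIntegral.continuousOn_primitive_interval (a := (0:ℝ)) (b := R)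
      (μ := volume) (f := fun s => |f s|) (by rwa [huIcc])
    rwa [huIcc] at this
  have hPtend : Tendsto P (nhdsWithin 0 (Ioi (0:ℝ))) (nhds 0) := by
    have := (hPcont 0 hmem0R).tendsto
    simp only [hPdef, intervalIntegral.integral_same] at this
    exact this.mono_left hle
  have hQtend : Tendsto Q (nhdsWithin 0 (Ioi (0:ℝ))) (nhds 0) := by
    have := (hQcont 0 hmem0R).tendsto
    simp only [hQdef, intervalIntegral.integral_same] at this
    exact this.mono_left hle
  -- key identity
  have key : ∀ r ∈ S, F r = (F R - P R) + P r := by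
    intro r hr
    have h1 : ∫ t in r..R, f t = F R - F r :=
      ftc F f hw' r R hr.1 hr.2 le_rfl (hIf r R hr.1.le hr.2 le_rfl)
    have h2 : P r + ∫ t in r..R, f t = P R :=
      intervalIntegral.integral_add_adjacent_intervals
        (hIf 0 r le_rfl hr.1.le (hr.2.trans le_rfl)) (hIf r R hr.1.le hr.2 le_rfl)
    linarith
  refine ⟨F R - P R, ?_, ?_⟩
  · have htend : Tendsto (fun r => (F R - P R) + P r) (nhdsWithin 0 (Ioi (0:ℝ)))
        (nhds ((F R - P R) + 0)) := tendsto_const_nhds.add hPtend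
    rw [add_zero] at htend
    refine htend.congr' ?_
    filter_upwards [Ioc_mem_nhdsGT_of_mem (⟨le_rfl, hR⟩ : (0:ℝ) ∈ Ico 0 R)] with r hr
    exact (key r hr).symm
  · intro hα
    have hFP : ∀ r ∈ S, F r = P r := by
      intro r hr; have := key r hr; rw [hα, zero_add] at this; exact this
    have hQbound : ∀ r ∈ S, |F r| ≤ Q r := by
      intro r hr
      rw [hFP r hr]
      exact intervalIntegral.abs_integral_le_integral_abs hr.1.le
    have hw'bound : ∀ t ∈ S, |w' t| ≤ Q t / t := by
      intro t ht
      have h1 : |F t| ≤ Q t := hQbound t ht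
      have h2 : |t * w' t| ≤ Q t := h1
      rw [abs_mul, abs_of_pos ht.1] at h2
      rw [le_div_iff₀ ht.1]
      linarith [h2]
    -- log(1/r) → ∞
    have hlog : Tendsto (fun r : ℝ => Real.log (1 / r)) (nhdsWithin 0 (Ioi (0:ℝ))) atTop := by
      have : Tendsto (fun r : ℝ => -Real.log r) (nhdsWithin 0 (Ioi (0:ℝ))) atTop :=
        tendsto_neg_atBot_atTop.comp Real.tendsto_log_nhdsGT_zero
      refine this.congr (fun r => ?_)
      rw [one_div, Real.log_inv]
    rw [NormedAddCommGroup.tendsto_nhds_zero]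
    intro ε' hε'
    -- choose δ
    obtain ⟨δ, hδpos, hδ⟩ : ∃ δ > 0, ∀ t : ℝ, 0 < t → t < δ → Q t < ε' / 2 := by
      have := Metric.tendsto_nhdsWithin_nhds.1 hQtend (ε' / 2) (by linarith)
      obtain ⟨δ, hδpos, hδ⟩ := this
      refine ⟨δ, hδpos, fun t ht htδ => ?_⟩
      have h5 := hδ (mem_Ioi.2 ht) (by rw [Real.dist_eq, sub_zero, abs_of_pos ht]; exact htδ)
      rw [Real.dist_eq, sub_zero] at h5
      exact lt_of_le_of_lt (le_abs_self _) h5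
    set δ0 : ℝ := min (δ / 2) R with hδ0def
    have hδ0pos : 0 < δ0 := lt_min (by linarith) hR
    have hδ0R : δ0 ≤ R := min_le_right _ _
    have hδ0lt : δ0 < δ := lt_of_le_of_lt (min_le_left _ _) (by linarith)
    have hQδ0 : ∀ t : ℝ, 0 < t → t ≤ δ0 → Q t ≤ ε' / 2 :=
      fun t ht htδ => (hδ t ht (lt_of_le_of_lt htδ hδ0lt)).le
    set C : ℝ := ∫ t in δ0..R, |w' t| with hCdef
    set K : ℝ := |w R| + C + (ε' / 2) * Real.log δ0 with hKdef
    -- interval integrability of w' and |w'|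
    have hIw' : ∀ a b : ℝ, 0 < a → a ≤ b → b ≤ R → IntervalIntegrable w' volume a b :=
      fun a b ha hab hbR => (hw'cont.mono (fun y hy => ⟨ha.trans_le hy.1, hy.2.trans hbR⟩)
        : ContinuousOn w' (Icc a b)).intervalIntegrable_of_Icc hab
    have hIw'abs : ∀ a b : ℝ, 0 < a → a ≤ b → b ≤ R →
        IntervalIntegrable (fun t => |w' t|) volume a b :=
      fun a b ha hab hbR => ((hw'cont.mono (fun y hy => ⟨ha.trans_le hy.1, hy.2.trans hbR⟩)
        : ContinuousOn w' (Icc a b)).abs).intervalIntegrable_of_Icc hab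
    -- main pointwise bound
    have main : ∀ r : ℝ, 0 < r → r < δ0 → |w r| ≤ K + (ε' / 2) * Real.log (1 / r) := by
      intro r hr hrδ0
      have hrS : r ∈ S := ⟨hr, (hrδ0.le.trans hδ0R)⟩
      have hftc : ∫ t in r..R, w' t = w R - w r :=
        ftc w w' hw r R hr (hrδ0.le.trans hδ0R) le_rfl (hIw' r R hr (hrδ0.le.trans hδ0R) le_rfl)
      have habs : |∫ t in r..R, w' t| ≤ ∫ t in r..R, |w' t| :=
        intervalIntegral.abs_integral_le_integral_abs (hrδ0.le.trans hδ0R)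
      have hsplit : (∫ t in r..δ0, |w' t|) + C = ∫ t in r..R, |w' t| := by
        rw [hCdef]
        exact intervalIntegral.integral_add_adjacent_intervals
          (hIw'abs r δ0 hr hrδ0.le hδ0R) (hIw'abs δ0 R hδ0pos hδ0R le_rfl)
      -- bound on [r, δ0]
      have hmono : (∫ t in r..δ0, |w' t|) ≤ ∫ t in r..δ0, (ε' / 2) * (1 / t) := by
        apply intervalIntegral.integral_mono_on hrδ0.le (hIw'abs r δ0 hr hrδ0.le hδ0R)
        · apply ContinuousOn.intervalIntegrable_of_Icc hrδ0.le
          exact (continuousOn_const.mul ((continuousOn_const.div continuousOn_id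
            (fun x hx => ne_of_gt (hr.trans_le hx.1)))))
        · intro x hx
          have hxpos : 0 < x := hr.trans_le hx.1
          have hxS : x ∈ S := ⟨hxpos, hx.2.trans (hδ0R)⟩
          have h1 : |w' x| ≤ Q x / x := hw'bound x hxS
          have h2 : Q x ≤ ε' / 2 := hQδ0 x hxpos hx.2
          calc |w' x| ≤ Q x / x := h1
            _ ≤ (ε' / 2) / x := by gcongr
            _ = (ε' / 2) * (1 / x) := by ring
      have hlogint : ∫ t in r..δ0, (ε' / 2) * (1 / t)
          = (ε' / 2) * (Real.log δ0 - Real.log r) := by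
        rw [intervalIntegral.integral_const_mul, integral_one_div
          (by rw [uIcc_of_le hrδ0.le]; exact fun hc => absurd hc.1 (not_le.2 hr)),
          Real.log_div (ne_of_gt hδ0pos) (ne_of_gt hr)]
      have h4 : (∫ t in r..δ0, |w' t|) ≤ (ε' / 2) * (Real.log δ0 - Real.log r) :=
        hlogint ▸ hmono
      have hpair := abs_le.1 (hftc ▸ habs)
      have hW1 := le_abs_self (w R)
      have hW2 := neg_abs_le (w R)
      have hloginv : Real.log (1 / r) = -Real.log r := by rw [one_div, Real.log_inv]
      rw [hKdef, hloginv, abs_le]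
      constructor <;> [skip; skip] <;>
        · obtain ⟨hp1, hp2⟩ := hpair
          linarith [hsplit, h4]
    -- conclude
    filter_upwards [Ioo_mem_nhdsGT_of_mem (⟨le_rfl, hδ0pos⟩ : (0:ℝ) ∈ Ico 0 δ0),
      hlog.eventually_gt_atTop (max 1 (2 * |K| / ε'))] with r hr hrlog
    set L : ℝ := Real.log (1 / r) with hLdef
    have hL1 : 1 < L := lt_of_le_of_lt (le_max_left _ _) hrlog
    have hLpos : 0 < L := by linarith
    have hKL : 2 * |K| / ε' < L := lt_of_le_of_lt (le_max_right _ _) hrlog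
    have hK2 : 2 * |K| < L * ε' := (div_lt_iff₀ hε').1 hKL
    have hwb := main r hr.1 hr.2
    rw [← hLdef] at hwb
    rw [Real.norm_eq_abs, abs_div, abs_of_pos hLpos, div_lt_iff₀ hLpos]
    have hKabs : K ≤ |K| := le_abs_self K
    have e1 : L * ε' = ε' / 2 * L + ε' / 2 * L := by ring
    have e2 : ε' * L = L * ε' := by ring
    clear_value L K C δ0
    linarith
end

section
/- Let B ⊂ ℝ² be the open unit ball, let u ∈ L¹(B) satisfy |u(x)| ≤ C·ln(1/|x|) for a.e. x ∈ B, and let ζ ∈ C_c^∞(B). For ε > 0 set ζ_ε(x) = ζ(x/ε). Then there exists a constant C' > 0 (depending on C, ζ) such that |∫_B u·Δζ_ε dx| ≤ C'·ln(1/ε) for all ε ∈ (0, 1/2). -/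
open Real MeasureTheory Metric Set

variable {n : ℕ}

lemma lap_scale (ζ : EuclideanSpace ℝ (Fin n) → ℝ) (hζ : ContDiff ℝ (⊤ : ℕ∞) ζ) (c : ℝ)
    (x : EuclideanSpace ℝ (Fin n)) :
    laplacian (fun y => ζ (c • y)) x = c ^ 2 * laplacian ζ (c • x) := by
  set S : EuclideanSpace ℝ (Fin n) →L[ℝ] EuclideanSpace ℝ (Fin n) :=
    c • ContinuousLinearMap.id ℝ (EuclideanSpace ℝ (Fin n)) with hS
  have hSa : ∀ y : EuclideanSpace ℝ (Fin n), S y = c • y := fun y => rfl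
  have hdζ : Differentiable ℝ ζ := hζ.differentiable (by simp)
  have hstep1 : ∀ y : EuclideanSpace ℝ (Fin n),
      fderiv ℝ (fun z => ζ (c • z)) y = (fderiv ℝ ζ (c • y)).comp S := by
    intro y
    have : (fun z => ζ (c • z)) = ζ ∘ S := rfl
    rw [this, fderiv_comp y (hdζ _) S.differentiableAt, S.fderiv, hSa]
  unfold laplacian
  rw [Finset.mul_sum]
  refine Finset.sum_congr rfl fun i _ => ?_
  set e : EuclideanSpace ℝ (Fin n) := EuclideanSpace.single i 1
  set h : EuclideanSpace ℝ (Fin n) → ℝ := fun z => fderiv ℝ ζ z e with hh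
  have hch : ContDiff ℝ (⊤ : ℕ∞) h := (hζ.fderiv_right (by simp)).clm_apply contDiff_const
  have hdh : Differentiable ℝ h := hch.differentiable (by simp)
  have hg : (fun y => fderiv ℝ (fun z => ζ (c • z)) y e) = fun y => c * h (c • y) := by
    funext y
    rw [hstep1]
    show (fderiv ℝ ζ (c • y)) (S e) = _
    rw [hSa, ContinuousLinearMap.map_smul, smul_eq_mul]
  rw [hg]
  have heq : (fun y : EuclideanSpace ℝ (Fin n) => h (c • y)) = h ∘ S := rfl
  have hdhS : DifferentiableAt ℝ (fun y : EuclideanSpace ℝ (Fin n) => h (c • y)) x := by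
    rw [heq]; exact (hdh _).comp x S.differentiableAt
  have h2 : fderiv ℝ (fun y => c * h (c • y)) x
      = c • fderiv ℝ (fun y : EuclideanSpace ℝ (Fin n) => h (c • y)) x :=
    fderiv_const_mul hdhS c
  have h3 : fderiv ℝ (fun y : EuclideanSpace ℝ (Fin n) => h (c • y)) x
      = (fderiv ℝ h (c • x)).comp S := by
    rw [heq, fderiv_comp x (hdh _) S.differentiableAt, S.fderiv, hSa]
  rw [h2, h3]
  show c • ((fderiv ℝ h (c • x)) (S e)) = _
  rw [hSa, ContinuousLinearMap.map_smul]
  simp [smul_eq_mul]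
  ring

lemma tsupport_h_subset (ζ : EuclideanSpace ℝ (Fin n) → ℝ) (e : EuclideanSpace ℝ (Fin n)) :
    tsupport (fun z => fderiv ℝ ζ z e) ⊆ tsupport ζ := by
  apply closure_minimal _ (isClosed_tsupport ζ)
  intro z hz
  have : fderiv ℝ ζ z ≠ 0 := by
    intro h0; apply hz; show (fderiv ℝ ζ z) e = 0; rw [h0]; rfl
  exact support_fderiv_subset ℝ (Function.mem_support.2 this)

lemma lap_zero_of_nmem (ζ : EuclideanSpace ℝ (Fin n) → ℝ) (x : EuclideanSpace ℝ (Fin n))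
    (hx : x ∉ tsupport ζ) : laplacian ζ x = 0 := by
  unfold laplacian
  refine Finset.sum_eq_zero fun i _ => ?_
  have hx' : x ∉ tsupport (fun z => fderiv ℝ ζ z (EuclideanSpace.single i 1)) :=
    fun h => hx (tsupport_h_subset ζ _ h)
  have : fderiv ℝ (fun z => fderiv ℝ ζ z (EuclideanSpace.single i 1)) x = 0 := by
    by_contra h0
    exact hx' (support_fderiv_subset ℝ (Function.mem_support.2 h0))
  rw [this]; rfl

lemma lap_continuous (ζ : EuclideanSpace ℝ (Fin n) → ℝ) (hζ : ContDiff ℝ (⊤ : ℕ∞) ζ) :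
    Continuous (laplacian ζ) := by
  unfold laplacian
  apply continuous_finset_sum
  intro i _
  have hch : ContDiff ℝ (⊤ : ℕ∞) (fun z => fderiv ℝ ζ z (EuclideanSpace.single i 1)) :=
    (hζ.fderiv_right (by simp)).clm_apply contDiff_const
  have : ContDiff ℝ (⊤ : ℕ∞) (fun x => fderiv ℝ (fun z => fderiv ℝ ζ z (EuclideanSpace.single i 1)) x (EuclideanSpace.single i 1)) :=
    (hch.fderiv_right (by simp)).clm_apply contDiff_const
  exact this.continuous

lemma lap_bound (ζ : EuclideanSpace ℝ (Fin n) → ℝ) (hζ : ContDiff ℝ (⊤ : ℕ∞) ζ)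
    (hζc : HasCompactSupport ζ) : ∃ M : ℝ, 0 ≤ M ∧ ∀ x, |laplacian ζ x| ≤ M := by
  have hcs : HasCompactSupport (laplacian ζ) := by
    apply HasCompactSupport.intro hζc
    exact fun x hx => lap_zero_of_nmem ζ x hx
  obtain ⟨M, hM⟩ := hcs.exists_bound_of_continuous (lap_continuous ζ hζ)
  refine ⟨M, le_trans (norm_nonneg _) (hM 0), fun x => ?_⟩
  simpa [Real.norm_eq_abs] using hM x

lemma log_lintegral_bound (ε : ℝ) (hε : 0 < ε) (hε2 : ε < 1/2) :
    ∫⁻ x in closedBall (0 : EuclideanSpace ℝ (Fin 2)) ε, ENNReal.ofReal (Real.log (1/‖x‖))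
      ≤ volume (ball (0:EuclideanSpace ℝ (Fin 2)) 1)
        * ENNReal.ofReal (ε^2 * (Real.log (1/ε) + 1)) := by
  set V := volume (ball (0:EuclideanSpace ℝ (Fin 2)) 1) with hV
  set f : EuclideanSpace ℝ (Fin 2) → ℝ := fun x => Real.log (1/‖x‖) with hf
  have f_meas : Measurable f := Real.measurable_log.comp (measurable_const.div measurable_norm)
  have hε1 : ε < 1 := by linarith
  have f_nn : ∀ x ∈ closedBall (0 : EuclideanSpace ℝ (Fin 2)) ε, 0 ≤ f x := by
    intro x hx
    rcases eq_or_lt_of_le (norm_nonneg x) with h0 | h0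
    · simp [hf, ← h0]
    · refine Real.log_nonneg (one_le_one_div h0 ?_)
      exact le_trans (mem_closedBall_zero_iff.1 hx) hε1.le
  set t₀ := Real.log (1/ε) with ht₀
  have ht₀pos : 0 < t₀ := Real.log_pos (by rw [lt_div_iff₀ hε]; linarith)
  have hexpt₀ : Real.exp (-t₀) = ε := by
    rw [ht₀, one_div, Real.log_inv, neg_neg, Real.exp_log hε]
  rw [lintegral_eq_lintegral_meas_le _
    ((ae_restrict_iff' measurableSet_closedBall).2 (ae_of_all _ f_nn)) f_meas.aemeasurable]
  have key : ∀ t ∈ Ioi (0:ℝ),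
      (volume.restrict (closedBall (0 : EuclideanSpace ℝ (Fin 2)) ε)) {a | t ≤ f a}
        ≤ ENNReal.ofReal (min (Real.exp (-t)) ε ^ 2) * V := by
    intro t ht
    rw [Measure.restrict_apply (measurableSet_le measurable_const f_meas)]
    have hsub : {a : EuclideanSpace ℝ (Fin 2) | t ≤ f a} ∩ closedBall 0 ε
        ⊆ closedBall 0 (min (Real.exp (-t)) ε) := by
      rintro a ⟨ha1, ha2⟩
      rw [mem_closedBall_zero_iff] at ha2 ⊢
      refine le_min ?_ ha2
      rcases eq_or_lt_of_le (norm_nonneg a) with h0 | h0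
      · rw [← h0]; exact (Real.exp_pos _).le
      · have : Real.log ‖a‖ ≤ -t := by
          have := ha1
          simp only [hf, mem_setOf_eq, one_div, Real.log_inv] at this
          linarith
        calc ‖a‖ = Real.exp (Real.log ‖a‖) := (Real.exp_log h0).symm
          _ ≤ Real.exp (-t) := Real.exp_le_exp.2 this
    calc volume ({a : EuclideanSpace ℝ (Fin 2) | t ≤ f a} ∩ closedBall 0 ε)
        ≤ volume (closedBall (0 : EuclideanSpace ℝ (Fin 2)) (min (Real.exp (-t)) ε)) :=
          measure_mono hsub
      _ = ENNReal.ofReal (min (Real.exp (-t)) ε ^ 2) * V := by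
          rw [Measure.addHaar_closedBall _ _ (le_min (Real.exp_pos _).le hε.le)]
          congr 2
          simp [finrank_euclideanSpace_fin]
  calc ∫⁻ t in Ioi (0:ℝ),
        (volume.restrict (closedBall (0 : EuclideanSpace ℝ (Fin 2)) ε)) {a | t ≤ f a}
      ≤ ∫⁻ t in Ioi (0:ℝ), ENNReal.ofReal (min (Real.exp (-t)) ε ^ 2) * V :=
        setLIntegral_mono' measurableSet_Ioi key
    _ ≤ (∫⁻ t in Ioc (0:ℝ) t₀, ENNReal.ofReal (min (Real.exp (-t)) ε ^ 2) * V)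
        + ∫⁻ t in Ioi t₀, ENNReal.ofReal (min (Real.exp (-t)) ε ^ 2) * V := by
        rw [← Ioc_union_Ioi_eq_Ioi ht₀pos.le]
        exact lintegral_union_le _ _ _
    _ ≤ (∫⁻ _t in Ioc (0:ℝ) t₀, ENNReal.ofReal (ε ^ 2) * V)
        + ∫⁻ t in Ioi t₀, ENNReal.ofReal (ε * Real.exp (-t)) * V := by
        refine add_le_add (lintegral_mono fun t => ?_) (lintegral_mono fun t => ?_)
        · exact mul_le_mul_left (ENNReal.ofReal_le_ofReal
            (pow_le_pow_left₀ (le_min (Real.exp_pos _).le hε.le) (min_le_right _ _) 2)) V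
        · refine mul_le_mul_left (ENNReal.ofReal_le_ofReal ?_) V
          rw [pow_two]
          exact mul_le_mul (min_le_right _ _) (min_le_left _ _)
            (le_min (Real.exp_pos _).le hε.le) hε.le
    _ ≤ V * ENNReal.ofReal (ε^2 * (t₀ + 1)) := by
        have hfin : V ≠ ⊤ := measure_ball_lt_top.ne
        rw [setLIntegral_const]
        have h3 : ∫⁻ t in Ioi t₀, ENNReal.ofReal (Real.exp (-t)) = ENNReal.ofReal ε := by
          rw [← ofReal_integral_eq_lintegral_ofReal]
          · rw [integral_exp_neg_Ioi, hexpt₀]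
          · simpa using (exp_neg_integrableOn_Ioi t₀ zero_lt_one).integrable
          · exact ae_of_all _ fun t => (Real.exp_pos _).le
        have h2 : (∫⁻ t in Ioi t₀, ENNReal.ofReal (ε * Real.exp (-t)) * V)
            = ENNReal.ofReal ε * (ENNReal.ofReal ε * V) := by
          simp_rw [ENNReal.ofReal_mul hε.le, mul_assoc]
          rw [lintegral_const_mul' _ _ ENNReal.ofReal_ne_top,
            lintegral_mul_const' _ _ hfin, h3]
        rw [h2, Real.volume_Ioc]
        calc ENNReal.ofReal (ε ^ 2) * V * ENNReal.ofReal (t₀ - 0)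
              + ENNReal.ofReal ε * (ENNReal.ofReal ε * V)
            = (ENNReal.ofReal (ε^2 * t₀) + ENNReal.ofReal (ε * ε)) * V := by
              rw [sub_zero, mul_right_comm, ← ENNReal.ofReal_mul (by positivity : (0:ℝ) ≤ ε^2),
                ← mul_assoc, ← ENNReal.ofReal_mul hε.le, ← add_mul]
          _ = V * ENNReal.ofReal (ε^2 * t₀ + ε * ε) := by
              rw [← ENNReal.ofReal_add (by positivity) (by positivity), mul_comm]
          _ = V * ENNReal.ofReal (ε^2 * (t₀ + 1)) := by
              congr 1
              ring
          _ ≤ V * ENNReal.ofReal (ε^2 * (t₀ + 1)) := le_rfl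

/-- if `u ∈ L¹(B)` (`B` the unit ball of `ℝ²`) satisfies
`|u(x)| ≤ C ln(1/|x|)` a.e. in `B`, and `ζ ∈ C_c^∞(B)`, then with `ζ_ε(x) = ζ(x/ε)` there
is `C' > 0` with `|∫_B u Δζ_ε| ≤ C' ln(1/ε)` for all `ε ∈ (0,1/2)`. -/
theorem stmt19 (C : ℝ) (u : EuclideanSpace ℝ (Fin 2) → ℝ)
    (hu : IntegrableOn u (ball (0 : EuclideanSpace ℝ (Fin 2)) 1))
    (hbound : ∀ᵐ x ∂(volume : Measure (EuclideanSpace ℝ (Fin 2))),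
      x ∈ ball (0 : EuclideanSpace ℝ (Fin 2)) 1 → |u x| ≤ C * Real.log (1 / ‖x‖))
    (ζ : EuclideanSpace ℝ (Fin 2) → ℝ) (hζ : ContDiff ℝ (⊤ : ℕ∞) ζ) (hζc : HasCompactSupport ζ)
    (hζs : tsupport ζ ⊆ ball (0 : EuclideanSpace ℝ (Fin 2)) 1) :
    ∃ C' : ℝ, 0 < C' ∧ ∀ ε ∈ Ioo (0 : ℝ) (1 / 2),
      |∫ x in ball (0 : EuclideanSpace ℝ (Fin 2)) 1,
          u x * laplacian (fun y => ζ (ε⁻¹ • y)) x| ≤ C' * Real.log (1 / ε) := by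
  obtain ⟨M, hM0, hM⟩ := lap_bound ζ hζ hζc
  set V : ENNReal := volume (ball (0:EuclideanSpace ℝ (Fin 2)) 1) with hVdef
  have hVfin : V ≠ ⊤ := measure_ball_lt_top.ne
  set Vr : ℝ := V.toReal with hVr
  have hVrpos : 0 < Vr := ENNReal.toReal_pos (measure_ball_pos _ _ one_pos).ne' hVfin
  set C₁ : ℝ := |C| + 1 with hC₁
  have hC₁pos : 0 < C₁ := by positivity
  set M₁ : ℝ := M + 1 with hM₁
  have hM₁pos : 0 < M₁ := by linarith
  refine ⟨3 * M₁ * C₁ * Vr, by positivity, ?_⟩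
  rintro ε ⟨hε, hε2⟩
  have hε1 : ε < 1 := by linarith
  have hcpos : 0 < ε⁻¹ := inv_pos.2 hε
  set c : ℝ := ε⁻¹ with hc
  set t₀ : ℝ := Real.log (1/ε) with ht₀def
  have ht₀ : Real.log 2 ≤ t₀ := by
    apply Real.log_le_log two_pos
    rw [le_div_iff₀ hε]; linarith
  have ht₀pos : 0 < t₀ := lt_of_lt_of_le (Real.log_pos one_lt_two) ht₀
  set K : ℝ := c^2 * (M₁ * C₁) with hK
  have hKpos : 0 < K := by positivity
  set L : EuclideanSpace ℝ (Fin 2) → ℝ := laplacian (fun y => ζ (c • y)) with hL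
  -- pointwise bound
  set g : EuclideanSpace ℝ (Fin 2) → ENNReal :=
    (closedBall (0:EuclideanSpace ℝ (Fin 2)) ε).indicator
      (fun x => ENNReal.ofReal (K * Real.log (1/‖x‖))) with hg
  have claim1 : ∀ᵐ x ∂(volume.restrict (ball (0:EuclideanSpace ℝ (Fin 2)) 1)),
      ENNReal.ofReal ‖u x * L x‖ ≤ g x := by
    filter_upwards [ae_restrict_of_ae hbound, ae_restrict_mem measurableSet_ball]
      with x hx hxball
    by_cases hxε : ‖x‖ ≤ ε
    · rw [hg, indicator_of_mem (mem_closedBall_zero_iff.2 hxε)]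
      apply ENNReal.ofReal_le_ofReal
      have hlog : 0 ≤ Real.log (1/‖x‖) := by
        rcases eq_or_lt_of_le (norm_nonneg x) with h0 | h0
        · simp [← h0]
        · exact Real.log_nonneg (one_le_one_div h0 (by linarith))
      have hub : |u x| ≤ C₁ * Real.log (1/‖x‖) := by
        refine le_trans (hx hxball) (mul_le_mul_of_nonneg_right ?_ hlog)
        rw [hC₁]; exact le_trans (le_abs_self C) (by linarith)
      have hLb : |L x| ≤ c^2 * M₁ := by
        rw [hL, lap_scale ζ hζ c x, abs_mul, abs_pow, abs_of_pos hcpos]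
        have := hM (c • x)
        nlinarith [sq_nonneg c]
      calc ‖u x * L x‖ = |u x| * |L x| := by rw [Real.norm_eq_abs, abs_mul]
        _ ≤ (C₁ * Real.log (1/‖x‖)) * (c^2 * M₁) :=
            mul_le_mul hub hLb (abs_nonneg _) (by positivity)
        _ = K * Real.log (1/‖x‖) := by rw [hK]; ring
    · have hLz : L x = 0 := by
        rw [hL, lap_scale ζ hζ c x, lap_zero_of_nmem ζ _ ?_, mul_zero]
        intro hmem
        have := hζs hmem
        rw [mem_ball_zero_iff, norm_smul, Real.norm_eq_abs, abs_of_pos hcpos] at this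
        push_neg at hxε
        rw [hc] at this
        have h1 : ε⁻¹ * ε = 1 := inv_mul_cancel₀ hε.ne'
        nlinarith [mul_lt_mul_of_pos_left hxε (inv_pos.2 hε)]
      simp [hLz]
  -- main chain
  rw [← Real.norm_eq_abs]
  calc ‖∫ x in ball (0:EuclideanSpace ℝ (Fin 2)) 1, u x * L x‖
      ≤ (∫⁻ x in ball (0:EuclideanSpace ℝ (Fin 2)) 1,
          ENNReal.ofReal ‖u x * L x‖).toReal := norm_integral_le_lintegral_norm _
    _ ≤ (ENNReal.ofReal K * (V * ENNReal.ofReal (ε^2 * (t₀ + 1)))).toReal := by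
        apply ENNReal.toReal_mono
        · exact ENNReal.mul_ne_top ENNReal.ofReal_ne_top
            (ENNReal.mul_ne_top hVfin ENNReal.ofReal_ne_top)
        calc ∫⁻ x in ball (0:EuclideanSpace ℝ (Fin 2)) 1, ENNReal.ofReal ‖u x * L x‖
            ≤ ∫⁻ x in ball (0:EuclideanSpace ℝ (Fin 2)) 1, g x := lintegral_mono_ae claim1
          _ ≤ ∫⁻ x, g x := setLIntegral_le_lintegral _ _
          _ = ∫⁻ x in closedBall (0:EuclideanSpace ℝ (Fin 2)) ε,
                ENNReal.ofReal (K * Real.log (1/‖x‖)) := by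
              rw [hg, lintegral_indicator measurableSet_closedBall]
          _ = ENNReal.ofReal K * ∫⁻ x in closedBall (0:EuclideanSpace ℝ (Fin 2)) ε,
                ENNReal.ofReal (Real.log (1/‖x‖)) := by
              simp_rw [ENNReal.ofReal_mul hKpos.le]
              rw [lintegral_const_mul' _ _ ENNReal.ofReal_ne_top]
          _ ≤ ENNReal.ofReal K * (V * ENNReal.ofReal (ε^2 * (t₀ + 1))) :=
              mul_le_mul_right (log_lintegral_bound ε hε hε2) _
    _ ≤ (3 * M₁ * C₁ * Vr) * t₀ := by
        rw [ENNReal.toReal_mul, ENNReal.toReal_mul, ENNReal.toReal_ofReal hKpos.le,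
          ENNReal.toReal_ofReal (by positivity)]
        have hc2 : c^2 * ε^2 = 1 := by rw [hc]; field_simp
        have heq : K * (Vr * (ε^2 * (t₀ + 1))) = (c^2 * ε^2) * (M₁ * C₁ * Vr * (t₀ + 1)) := by
          rw [hK]; ring
        rw [← hVr, heq, hc2, one_mul]
        have hP : 0 < M₁ * C₁ * Vr := by positivity
        have h2t : 1 ≤ 2 * t₀ := by nlinarith [Real.log_two_gt_d9]
        nlinarith [mul_le_mul_of_nonneg_left h2t hP.le]
end
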